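/- A Borel measure $\mu$ on the set $\Omega(d)$ of rank-one projections on $\mathbb{C}^d$ is uniquely determined by the sequence of its tensor moments $M_n(\mu) = \int P^{\otimes n}\, d\mu(P)$ for $n = 0, 1, 2, \dots$. That is, if two finite Borel measures $\mu, \nu$ on $\Omega(d)$ satisfy $M_n(\mu) = M_n(\nu)$ for all $n$, then $\mu = \nu$. -/

import Mathlib

open Matrix MeasureTheory

/-- The set of rank-one projections `|φ⟩⟨φ|` (with `φ` a unit vector) on `ℂ^d`. -/
def OmegaSet (d : ℕ) : Set (Matrix (Fin d) (Fin d) ℂ) :=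
  {P | ∃ φ : Fin d → ℂ, (∑ i, Complex.normSq (φ i)) = 1 ∧ P = vecMulVec φ (star φ)}

/--  carries its Borel σ-algebra. -/
noncomputable instance (d : ℕ) : MeasurableSpace ↥(OmegaSet d) := borel _

/-!
The matrix-entry functions `P ↦ P i j` separate the points of a compact set `X` of matrices, so
the star subalgebra of bounded continuous functions they generate is dense (Stone–Weierstrass)
and separates finite Borel measures on `X`. When every `P ∈ X` is Hermitian, the conjugate of an
entry function is again one, so that star subalgebra is just the linear span of the monomials
`P ↦ ∏ k, P (F k) (G k)`, whose integrals are the entries of the tensor moments `∫ P^{⊗n}`.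
The rank-one projections form such a set: the image of the unit sphere under `φ ↦ |φ⟩⟨φ|`.
-/

instance {m n R : Type*} [Countable m] [Countable n] [TopologicalSpace R] [PolishSpace R] :
    PolishSpace (Matrix m n R) :=
  inferInstanceAs (PolishSpace (m → n → R))

section MatrixEntries

open BoundedContinuousFunction

variable {ι : Type*} (X : Set (Matrix ι ι ℂ)) [CompactSpace X]

noncomputable def matrixEntry (i j : ι) : X →ᵇ ℂ :=
  mkOfCompact ⟨fun P => (P : Matrix ι ι ℂ) i j, continuous_subtype_val.matrix_elem i j⟩

def matrixEntries : Set (X →ᵇ ℂ) :=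
  Set.range (Function.uncurry (matrixEntry X))

variable {X}

lemma star_matrixEntry (hX : ∀ P ∈ X, P.IsHermitian) (i j : ι) :
    star (matrixEntry X i j) = matrixEntry X j i := by
  ext P
  exact (hX P P.2).apply j i

lemma star_matrixEntries_subset (hX : ∀ P ∈ X, P.IsHermitian) :
    star (matrixEntries X) ⊆ matrixEntries X := by
  rintro f ⟨⟨i, j⟩, hf⟩
  refine ⟨(j, i), ?_⟩
  rw [← star_star f, ← hf]
  exact (star_matrixEntry hX i j).symm

lemma exists_prod_eq_of_mem_closure_matrixEntries {g : X →ᵇ ℂ}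
    (hg : g ∈ Submonoid.closure (matrixEntries X)) :
    ∃ (n : ℕ) (F G : Fin n → ι), ⇑g = fun P : X => ∏ k, (P : Matrix ι ι ℂ) (F k) (G k) := by
  induction hg using Submonoid.closure_induction with
  | mem f hf =>
    obtain ⟨⟨i, j⟩, rfl⟩ := hf
    exact ⟨1, fun _ => i, fun _ => j, by ext P; simp [matrixEntry]⟩
  | one => exact ⟨0, Fin.elim0, Fin.elim0, by ext P; simp⟩
  | mul a b _ _ ha hb =>
    obtain ⟨n, F, G, hF⟩ := ha
    obtain ⟨m, F', G', hF'⟩ := hb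
    refine ⟨n + m, Fin.append F F', Fin.append G G', ?_⟩
    ext P
    simp [hF, hF', Fin.prod_univ_add]

lemma integral_eq_of_mem_adjoin_matrixEntries [MeasurableSpace X] [BorelSpace X]
    (hX : ∀ P ∈ X, P.IsHermitian) {μ ν : Measure X} [IsFiniteMeasure μ] [IsFiniteMeasure ν]
    (hmom : ∀ (n : ℕ) (F G : Fin n → ι),
      ∫ P, (∏ k, (P : Matrix ι ι ℂ) (F k) (G k)) ∂μ
        = ∫ P, (∏ k, (P : Matrix ι ι ℂ) (F k) (G k)) ∂ν)
    {g : X →ᵇ ℂ} (hg : g ∈ StarAlgebra.adjoin ℂ (matrixEntries X)) :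
    ∫ P, g P ∂μ = ∫ P, g P ∂ν := by
  replace hg : g ∈ Submodule.span ℂ (Submonoid.closure (matrixEntries X)) := by
    rw [← Set.union_eq_self_of_subset_right (star_matrixEntries_subset hX),
      ← StarAlgebra.adjoin_eq_span]
    exact hg
  induction hg using Submodule.span_induction with
  | mem f hf =>
    obtain ⟨n, F, G, hf⟩ := exists_prod_eq_of_mem_closure_matrixEntries hf
    rw [hf]
    exact hmom n F G
  | zero => simp
  | add a b _ _ ha hb =>
    simp only [coe_add, Pi.add_apply]
    rw [integral_add (a.integrable μ) (b.integrable μ),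
      integral_add (a.integrable ν) (b.integrable ν), ha, hb]
  | smul c a _ ha =>
    simp only [coe_smul, integral_smul, ha]

lemma separatesPoints_adjoin_matrixEntries :
    ((StarAlgebra.adjoin ℂ (matrixEntries X)).map (toContinuousMapStarₐ ℂ)).SeparatesPoints := by
  intro P Q hPQ
  obtain ⟨i, j, hij⟩ : ∃ i j, (P : Matrix ι ι ℂ) i j ≠ (Q : Matrix ι ι ℂ) i j := by
    by_contra! h
    exact hPQ (Subtype.ext (Matrix.ext h))
  exact ⟨_, ⟨_, ⟨matrixEntry X i j, StarAlgebra.subset_adjoin ℂ _ ⟨(i, j), rfl⟩, rfl⟩, rfl⟩, hij⟩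

end MatrixEntries

theorem MeasureTheory.Measure.ext_of_matrix_moments_eq {ι : Type*} [Countable ι]
    {X : Set (Matrix ι ι ℂ)} [CompactSpace X] [MeasurableSpace X] [BorelSpace X]
    (hX : ∀ P ∈ X, P.IsHermitian) {μ ν : Measure X} [IsFiniteMeasure μ] [IsFiniteMeasure ν]
    (hmom : ∀ (n : ℕ) (F G : Fin n → ι),
      ∫ P, (∏ k, (P : Matrix ι ι ℂ) (F k) (G k)) ∂μ
        = ∫ P, (∏ k, (P : Matrix ι ι ℂ) (F k) (G k)) ∂ν) :
    μ = ν :=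
  haveI : PolishSpace X := (isCompact_iff_compactSpace.mpr ‹_›).isClosed.polishSpace
  ext_of_forall_mem_subalgebra_integral_eq_of_polish separatesPoints_adjoin_matrixEntries
    fun _ hg => integral_eq_of_mem_adjoin_matrixEntries hX hmom hg

lemma omegaSet_eq_image_sphere (d : ℕ) :
    OmegaSet d = (fun φ : EuclideanSpace ℂ (Fin d) => vecMulVec φ (star φ)) ''
      Metric.sphere 0 1 := by
  have hnorm (φ : EuclideanSpace ℂ (Fin d)) : ‖φ‖ = 1 ↔ ∑ i, Complex.normSq (φ i) = 1 := by
    simp [EuclideanSpace.norm_eq, Complex.normSq_eq_norm_sq]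
  ext P
  constructor
  · rintro ⟨φ, hφ, rfl⟩
    exact ⟨WithLp.toLp 2 φ, by simpa [hnorm] using hφ, rfl⟩
  · rintro ⟨φ, hφ, rfl⟩
    exact ⟨φ, by simpa [hnorm] using hφ, rfl⟩

lemma isCompact_omegaSet (d : ℕ) : IsCompact (OmegaSet d) := by
  rw [omegaSet_eq_image_sphere]
  exact (isCompact_sphere 0 1).image (by fun_prop)

open scoped ComplexOrder in
lemma isHermitian_of_mem_omegaSet {d : ℕ} {P : Matrix (Fin d) (Fin d) ℂ} (hP : P ∈ OmegaSet d) :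
    P.IsHermitian := by
  obtain ⟨φ, -, rfl⟩ := hP
  exact (posSemidef_vecMulVec_self_star φ).isHermitian

instance (d : ℕ) : CompactSpace (OmegaSet d) :=
  isCompact_iff_compactSpace.mp (isCompact_omegaSet d)

instance (d : ℕ) : BorelSpace (OmegaSet d) := ⟨rfl⟩

/-- A finite Borel measure on `Ω(d)` is uniquely determined by its tensor moments
`∫ P^{⊗n} dμ(P)`, `n = 0, 1, 2, …` (the integrals are taken entrywise). -/
theorem stmt_15 (d : ℕ) (μ ν : Measure ↥(OmegaSet d))
    [IsFiniteMeasure μ] [IsFiniteMeasure ν]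
    (hmom : ∀ (n : ℕ) (F G : Fin n → Fin d),
      ∫ P, (∏ i, (P : Matrix (Fin d) (Fin d) ℂ) (F i) (G i)) ∂μ
        = ∫ P, (∏ i, (P : Matrix (Fin d) (Fin d) ℂ) (F i) (G i)) ∂ν) :
    μ = ν :=
  Measure.ext_of_matrix_moments_eq (fun _ => isHermitian_of_mem_omegaSet) hmom
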